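/- arXiv:2404.06319 — 3 statements merged into one kernel-verified Lean document; each statement's English description precedes it below -/
import Mathlib

section
/- If b ∈ ℝ^n is nonzero and nonnegative and ‖A‖ < 1 (spectral norm), then the absolute value equation Ax - |x| = b has no solution. -/
open Matrix

/-- Componentwise absolute value of a vector. -/
noncomputable def absv {n : ℕ} (x : Fin n → ℝ) : Fin n → ℝ := fun i => |x i|

/-- Euclidean norm of a vector. -/
noncomputable def vecEnorm {n : ℕ} (x : Fin n → ℝ) : ℝ := Real.sqrt (∑ i, x i ^ 2)

/-- Largest singular value (spectral / operator 2-norm). -/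
noncomputable def sigmaMax {n : ℕ} (A : Matrix (Fin n) (Fin n) ℝ) : ℝ :=
  sSup {r | ∃ x : Fin n → ℝ, vecEnorm x = 1 ∧ r = vecEnorm (A.mulVec x)}

/-- Smallest singular value. -/
noncomputable def sigmaMin {n : ℕ} (A : Matrix (Fin n) (Fin n) ℝ) : ℝ :=
  sInf {r | ∃ x : Fin n → ℝ, vecEnorm x = 1 ∧ r = vecEnorm (A.mulVec x)}

/-- Spectral radius of a real matrix (via its complex spectrum). -/
noncomputable def specRad {n : ℕ} (A : Matrix (Fin n) (Fin n) ℝ) : ENNReal :=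
  spectralRadius ℂ (A.map (Complex.ofReal ·))

lemma enorm_nonneg' {n : ℕ} (x : Fin n → ℝ) : 0 ≤ vecEnorm x := Real.sqrt_nonneg _

lemma enorm_sq' {n : ℕ} (x : Fin n → ℝ) : (vecEnorm x) ^ 2 = ∑ i, x i ^ 2 :=
  Real.sq_sqrt (Finset.sum_nonneg fun i _ => sq_nonneg _)

lemma enorm_smul' {n : ℕ} (a : ℝ) (x : Fin n → ℝ) : vecEnorm (a • x) = |a| * vecEnorm x := by
  unfold vecEnorm
  have h : ∑ i, (a • x) i ^ 2 = a ^ 2 * ∑ i, x i ^ 2 := by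
    rw [Finset.mul_sum]; congr 1; ext i; simp [mul_pow]
  rw [h, Real.sqrt_mul (sq_nonneg a), Real.sqrt_sq_eq_abs]

lemma enorm_eq_norm' {n : ℕ} (x : Fin n → ℝ) :
    vecEnorm x = ‖(WithLp.equiv 2 (Fin n → ℝ)).symm x‖ := by
  rw [EuclideanSpace.norm_eq]
  unfold vecEnorm
  simp only [Real.norm_eq_abs, sq_abs]
  rfl

lemma vecEnorm_pos' {n : ℕ} {x : Fin n → ℝ} (hx : x ≠ 0) : 0 < vecEnorm x := by
  rw [enorm_eq_norm']
  refine norm_pos_iff.mpr ?_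
  simpa using hx

lemma sigmaMax_bddAbove {n : ℕ} (A : Matrix (Fin n) (Fin n) ℝ) :
    BddAbove {r | ∃ x : Fin n → ℝ, vecEnorm x = 1 ∧ r = vecEnorm (A.mulVec x)} := by
  let L : EuclideanSpace ℝ (Fin n) →ₗ[ℝ] EuclideanSpace ℝ (Fin n) := Matrix.toEuclideanLin A
  let C := LinearMap.toContinuousLinearMap L
  refine ⟨‖C‖, ?_⟩
  rintro r ⟨x, hx, rfl⟩
  have hC : vecEnorm (A.mulVec x) = ‖C ((WithLp.equiv 2 (Fin n → ℝ)).symm x)‖ := by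
    rw [enorm_eq_norm']; rfl
  rw [hC]
  calc ‖C ((WithLp.equiv 2 (Fin n → ℝ)).symm x)‖
      ≤ ‖C‖ * ‖(WithLp.equiv 2 (Fin n → ℝ)).symm x‖ := C.le_opNorm _
    _ = ‖C‖ * 1 := by rw [← enorm_eq_norm', hx]
    _ = ‖C‖ := mul_one _

lemma mulVec_enorm_le {n : ℕ} (A : Matrix (Fin n) (Fin n) ℝ) (x : Fin n → ℝ) :
    vecEnorm (A.mulVec x) ≤ sigmaMax A * vecEnorm x := by
  by_cases hx0 : x = 0
  · subst hx0
    simp [Matrix.mulVec_zero, vecEnorm]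
  · have hc : 0 < vecEnorm x := vecEnorm_pos' hx0
    set c := vecEnorm x with hcdef
    have hu : vecEnorm (c⁻¹ • x) = 1 := by
      rw [enorm_smul', abs_of_pos (inv_pos.mpr hc), inv_mul_cancel₀ (ne_of_gt hc)]
    have hmem : vecEnorm (A.mulVec (c⁻¹ • x)) ∈
        {r | ∃ x : Fin n → ℝ, vecEnorm x = 1 ∧ r = vecEnorm (A.mulVec x)} :=
      ⟨c⁻¹ • x, hu, rfl⟩
    have hle := le_csSup (sigmaMax_bddAbove A) hmem
    have hAsmul : A.mulVec (c⁻¹ • x) = c⁻¹ • A.mulVec x := A.mulVec_smul c⁻¹ x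
    rw [hAsmul, enorm_smul', abs_of_pos (inv_pos.mpr hc)] at hle
    have := mul_le_mul_of_nonneg_right hle (le_of_lt hc)
    calc vecEnorm (A.mulVec x) = c⁻¹ * vecEnorm (A.mulVec x) * c := by
          field_simp
      _ ≤ sigmaMax A * c := this

theorem stmt3 {n : ℕ} (A : Matrix (Fin n) (Fin n) ℝ) (b : Fin n → ℝ)
    (hb : ∀ i, 0 ≤ b i) (hb0 : b ≠ 0) (hnorm : sigmaMax A < 1) :
    ¬ ∃ x : Fin n → ℝ, A.mulVec x - absv x = b := by
  rintro ⟨x, hx⟩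
  by_cases hx0 : x = 0
  · subst hx0
    apply hb0
    funext i
    have := congrFun hx i
    simp [Matrix.mulVec_zero, absv] at this
    exact this.symm
  · have hAx : A.mulVec x = b + absv x := sub_eq_iff_eq_add.mp hx
    obtain ⟨i₀, hi₀⟩ := Function.ne_iff.mp hb0
    have hbpos : 0 < ∑ i, b i ^ 2 := by
      refine Finset.sum_pos' (fun i _ => sq_nonneg _) ⟨i₀, Finset.mem_univ _, ?_⟩
      exact pow_pos (lt_of_le_of_ne (hb i₀) (Ne.symm hi₀)) 2
    have hsq : (vecEnorm x) ^ 2 < (vecEnorm (A.mulVec x)) ^ 2 := by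
      rw [enorm_sq', enorm_sq', hAx]
      have hterm : ∀ i ∈ Finset.univ, x i ^ 2 + b i ^ 2 ≤ ((b + absv x) i) ^ 2 := by
        intro i _
        have h1 := hb i
        have h2 : 0 ≤ |x i| := abs_nonneg _
        have h3 : |x i| ^ 2 = x i ^ 2 := sq_abs _
        simp only [Pi.add_apply, absv]
        nlinarith
      calc ∑ i, x i ^ 2 < ∑ i, (x i ^ 2 + b i ^ 2) := by
            rw [Finset.sum_add_distrib]; linarith
        _ ≤ ∑ i, ((b + absv x) i) ^ 2 := Finset.sum_le_sum hterm
    have hlt : vecEnorm x < vecEnorm (A.mulVec x) :=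
      lt_of_pow_lt_pow_left₀ 2 (enorm_nonneg' _) hsq
    have h1 := mulVec_enorm_le A x
    have hpos := vecEnorm_pos' hx0
    nlinarith [mul_lt_mul_of_pos_right hnorm hpos]
end

section
/- The interval matrix [A - I, A + I] is regular (every B with |B - A| ≤ I entrywise is nonsingular) if and only if the system |Ax| ≤ |x| has only the trivial solution x = 0. -/
open Matrix

theorem stmt8 {n : ℕ} (A : Matrix (Fin n) (Fin n) ℝ) :
    (∀ B : Matrix (Fin n) (Fin n) ℝ,
        (∀ i j, |B i j - A i j| ≤ (1 : Matrix (Fin n) (Fin n) ℝ) i j) → B.det ≠ 0) ↔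
      (∀ x : Fin n → ℝ, (∀ i, |A.mulVec x i| ≤ |x i|) → x = 0) := by
  constructor
  · intro hreg x hx
    by_contra hx0
    set d : Fin n → ℝ := fun i => if x i = 0 then 0 else -(A.mulVec x i) / (x i) with hd
    set B : Matrix (Fin n) (Fin n) ℝ := A + Matrix.diagonal d with hB
    have hbound : ∀ i j, |B i j - A i j| ≤ (1 : Matrix (Fin n) (Fin n) ℝ) i j := by
      intro i j
      simp only [hB, Matrix.add_apply, add_sub_cancel_left, Matrix.diagonal_apply,
        Matrix.one_apply]
      by_cases hij : i = j
      · simp only [hij, if_true]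
        by_cases hxi : x j = 0
        · simp [hd, hxi]
        · simp only [hd, hxi, if_false]
          rw [abs_div, div_le_one (abs_pos.mpr hxi), abs_neg]
          exact hx j
      · simp [hij]
    have hBx : B.mulVec x = 0 := by
      funext i
      simp only [hB, Matrix.add_mulVec, Matrix.mulVec_diagonal, Pi.add_apply, Pi.zero_apply]
      by_cases hxi : x i = 0
      · have : A.mulVec x i = 0 := by
          have := hx i
          rw [hxi, abs_zero] at this
          exact abs_eq_zero.mp (le_antisymm this (abs_nonneg _))
        simp [hd, hxi, this]
      · simp only [hd, hxi, if_false]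
        field_simp
        ring
    have hdet : B.det = 0 := by
      rw [← Matrix.exists_mulVec_eq_zero_iff]
      exact ⟨x, hx0, hBx⟩
    exact hreg B hbound hdet
  · intro h B hB
    intro hdet
    obtain ⟨v, hv0, hBv⟩ := Matrix.exists_mulVec_eq_zero_iff.mpr hdet
    apply hv0
    apply h
    intro i
    have hoff : ∀ j, j ≠ i → A i j = B i j := by
      intro j hj
      have := hB i j
      rw [Matrix.one_apply_ne' (by simpa using hj)] at this
      have : |B i j - A i j| = 0 := le_antisymm this (abs_nonneg _)
      have := abs_eq_zero.mp this
      linarith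
    have hAv : A.mulVec v i = (A i i - B i i) * v i := by
      have hsub : A.mulVec v i = (A - B).mulVec v i + B.mulVec v i := by
        rw [← Pi.add_apply, ← Matrix.add_mulVec, sub_add_cancel]
      rw [hsub, hBv]
      simp only [Pi.zero_apply, add_zero, Matrix.mulVec, dotProduct, Matrix.sub_apply]
      rw [Finset.sum_eq_single i]
      · intro j _ hj
        rw [hoff j hj]
        ring
      · intro hi; exact absurd (Finset.mem_univ i) hi
    rw [hAv, abs_mul]
    have h1 : |A i i - B i i| ≤ 1 := by
      have := hB i i
      rw [Matrix.one_apply_eq] at this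
      rw [abs_sub_comm]
      exact this
    calc |A i i - B i i| * |v i| ≤ 1 * |v i| :=
          mul_le_mul_of_nonneg_right h1 (abs_nonneg _)
      _ = |v i| := one_mul _
end

section
/- If both (A - I)^{-1} ≥ 0 and (A + I)^{-1} ≥ 0 entrywise (i.e., the interval matrix [A - I, A + I] is inverse nonnegative), then for every b ≥ 0 the absolute value equation Ax - |x| = b has a unique solution, and this solution is nonnegative. -/
open Matrix

/-!
Write `Ax - |x| = b` as `(A - I)x = b + (|x| - x)`. The right-hand side is nonnegative, so
inverse nonnegativity of `A - I` forces every solution to be nonnegative; on nonnegative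
vectors `|x| = x` and the equation becomes the linear system `(A - I)x = b`, whose unique
solution is `(A - I)⁻¹ b ≥ 0`.
-/

namespace Matrix

variable {ι R : Type*} [Fintype ι]

lemma mulVec_nonneg [Semiring R] [PartialOrder R] [IsOrderedRing R] {M : Matrix ι ι R}
    {v : ι → R} (hM : ∀ i j, 0 ≤ M i j) (hv : 0 ≤ v) : 0 ≤ M *ᵥ v :=
  fun i => dotProduct_nonneg_of_nonneg (fun j => hM i j) hv

variable [DecidableEq ι] [CommRing R]

lemma nonsing_inv_mulVec_mulVec {M : Matrix ι ι R} (hM : IsUnit M.det) (v : ι → R) :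
    M⁻¹ *ᵥ (M *ᵥ v) = v := by
  rw [mulVec_mulVec, nonsing_inv_mul M hM, one_mulVec]

lemma mulVec_nonsing_inv_mulVec {M : Matrix ι ι R} (hM : IsUnit M.det) (v : ι → R) :
    M *ᵥ (M⁻¹ *ᵥ v) = v := by
  rw [mulVec_mulVec, mul_nonsing_inv M hM, one_mulVec]

lemma nonneg_of_mulVec_nonneg [PartialOrder R] [IsOrderedRing R] {M : Matrix ι ι R}
    (hM : IsUnit M.det) (hM' : ∀ i j, 0 ≤ M⁻¹ i j) {v : ι → R} (hv : 0 ≤ M *ᵥ v) : 0 ≤ v :=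
  nonsing_inv_mulVec_mulVec hM v ▸ mulVec_nonneg hM' hv

end Matrix

section AbsoluteValueEquation

variable {n : ℕ} {A : Matrix (Fin n) (Fin n) ℝ} {x b : Fin n → ℝ}

lemma absv_eq_self (hx : 0 ≤ x) : absv x = x :=
  funext fun i => abs_of_nonneg (hx i)

lemma le_absv (x : Fin n → ℝ) : x ≤ absv x :=
  fun i => le_abs_self (x i)

lemma sub_one_mulVec_eq_of_mulVec_sub_absv_eq (hx : A *ᵥ x - absv x = b) :
    (A - 1) *ᵥ x = b + (absv x - x) := by
  rw [sub_mulVec, one_mulVec, ← hx]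
  abel

lemma nonneg_of_mulVec_sub_absv_eq (hA : IsUnit (A - 1).det) (hA' : ∀ i j, 0 ≤ (A - 1)⁻¹ i j)
    (hb : 0 ≤ b) (hx : A *ᵥ x - absv x = b) : 0 ≤ x := by
  refine nonneg_of_mulVec_nonneg hA hA' ?_
  rw [sub_one_mulVec_eq_of_mulVec_sub_absv_eq hx]
  exact add_nonneg hb (sub_nonneg.2 (le_absv x))

lemma mulVec_sub_absv_eq_iff_of_nonneg (hx : 0 ≤ x) :
    A *ᵥ x - absv x = b ↔ (A - 1) *ᵥ x = b := by
  rw [absv_eq_self hx, sub_mulVec, one_mulVec]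

end AbsoluteValueEquation

theorem stmt14_general {n : ℕ} (A : Matrix (Fin n) (Fin n) ℝ)
    (h1 : IsUnit (A - 1).det)
    (h1n : ∀ i j, 0 ≤ (A - 1)⁻¹ i j)
    (b : Fin n → ℝ) (hb : ∀ i, 0 ≤ b i) :
    ∃ x : Fin n → ℝ, (A.mulVec x - absv x = b ∧ ∀ i, 0 ≤ x i) ∧
      ∀ y : Fin n → ℝ, A.mulVec y - absv y = b → y = x := by
  have hx : 0 ≤ (A - 1)⁻¹ *ᵥ b := mulVec_nonneg h1n hb
  refine ⟨(A - 1)⁻¹ *ᵥ b, ⟨?_, hx⟩, fun y hy => ?_⟩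
  · exact (mulVec_sub_absv_eq_iff_of_nonneg hx).2 (mulVec_nonsing_inv_mulVec h1 b)
  · have hy' := (mulVec_sub_absv_eq_iff_of_nonneg
      (nonneg_of_mulVec_sub_absv_eq h1 h1n hb hy)).1 hy
    rw [← hy', nonsing_inv_mulVec_mulVec h1]

theorem stmt14 {n : ℕ} (A : Matrix (Fin n) (Fin n) ℝ)
    (h1 : IsUnit (A - 1).det) (h2 : IsUnit (A + 1).det)
    (h1n : ∀ i j, 0 ≤ (A - 1)⁻¹ i j) (h2n : ∀ i j, 0 ≤ (A + 1)⁻¹ i j)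
    (b : Fin n → ℝ) (hb : ∀ i, 0 ≤ b i) :
    ∃ x : Fin n → ℝ, (A.mulVec x - absv x = b ∧ ∀ i, 0 ≤ x i) ∧
      ∀ y : Fin n → ℝ, A.mulVec y - absv y = b → y = x :=
  stmt14_general A h1 h1n b hb
end
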